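/- Let f : ℝ → ℝ be 2π-periodic, integrable on [-π,π], and suppose the one-sided limits f(t-0) and f(t+0) exist at a point t. Then (1/(2π)) ∫_{-π}^{π} f(u+t) · (1 - r^2)/(1 - 2r cos u + r^2) du → (f(t-0) + f(t+0))/2 as r → 1⁻. -/

import Mathlib

open Real Filter MeasureTheory Set Topology

/-! The Poisson kernel `P r u = (1 - r²) / (1 - 2 r cos u + r²)` is positive and even, its mass
on `[0, δ]` is `2 arctan ((1 + r) / (1 - r) · tan (δ / 2))`, which tends to `π` as `r → 1⁻`, and
it tends to `0` uniformly on `[δ, π]`. Hence on `[0, π]` it is an approximate identity of mass `π`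
concentrated at `0`, which picks up `π` times the right limit of the integrand at `0`. Folding
`[-π, π]` onto `[0, π]` by evenness, the two halves contribute `π f(t+0)` and `π f(t-0)`. -/

theorem abs_integral_mul_le_of_abs_le {f w : ℝ → ℝ} {a b η : ℝ} (hab : a ≤ b)
    (hw : IntervalIntegrable w volume a b) (hf : ∀ u ∈ Ioc a b, |f u| ≤ η) :
    |∫ u in a..b, f u * w u| ≤ η * ∫ u in a..b, |w u| := by
  rw [← intervalIntegral.integral_const_mul]
  refine intervalIntegral.norm_integral_le_of_norm_le (f := fun u => f u * w u) hab
    (ae_of_all _ fun u hu => ?_) (hw.abs.const_mul η)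
  rw [Real.norm_eq_abs, abs_mul]
  exact mul_le_mul_of_nonneg_right (hf u hu) (abs_nonneg _)

theorem abs_integral_mul_sub_le {g k : ℝ → ℝ} {a δ L η η' : ℝ} (hδ : δ ∈ Icc 0 a)
    (hg : IntervalIntegrable g volume 0 a) (hk : ContinuousOn k (Icc 0 a))
    (hk_nonneg : ∀ u ∈ Icc 0 a, 0 ≤ k u) (hgL : ∀ u ∈ Ioc 0 δ, |g u - L| ≤ η)
    (hk_small : ∀ u ∈ Ioc δ a, |k u| ≤ η') :
    |(∫ u in 0..a, g u * k u) - L * ∫ u in 0..δ, k u|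
      ≤ η * (∫ u in 0..δ, k u) + η' * ∫ u in δ..a, |g u| := by
  have hsub₀ : uIcc 0 δ ⊆ Icc 0 a := by
    rw [uIcc_of_le hδ.1]; exact Icc_subset_Icc_right hδ.2
  have hsub₁ : uIcc δ a ⊆ Icc 0 a := by
    rw [uIcc_of_le hδ.2]; exact Icc_subset_Icc_left hδ.1
  have hg₀ : IntervalIntegrable g volume 0 δ := hg.mono_set (hsub₀.trans Icc_subset_uIcc)
  have hg₁ : IntervalIntegrable g volume δ a := hg.mono_set (hsub₁.trans Icc_subset_uIcc)
  have hk₀ : IntervalIntegrable k volume 0 δ := (hk.mono hsub₀).intervalIntegrable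
  have hgk₀ := hg₀.mul_continuousOn (hk.mono hsub₀)
  have hsplit : (∫ u in 0..a, g u * k u) - L * ∫ u in 0..δ, k u =
      (∫ u in 0..δ, (g u - L) * k u) + ∫ u in δ..a, k u * g u := by
    rw [← intervalIntegral.integral_add_adjacent_intervals hgk₀
        (hg₁.mul_continuousOn (hk.mono hsub₁)), ← intervalIntegral.integral_const_mul,
      add_sub_right_comm, ← intervalIntegral.integral_sub hgk₀ (hk₀.const_mul L)]
    congr 1 <;> exact intervalIntegral.integral_congr fun u _ => by ring
  have hnear : |∫ u in 0..δ, (g u - L) * k u| ≤ η * ∫ u in 0..δ, k u := by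
    refine (abs_integral_mul_le_of_abs_le hδ.1 hk₀ hgL).trans_eq ?_
    exact congrArg _ (intervalIntegral.integral_congr fun u hu =>
      abs_of_nonneg (hk_nonneg u (hsub₀ hu)))
  rw [hsplit]
  exact (abs_add_le _ _).trans
    (add_le_add hnear (abs_integral_mul_le_of_abs_le hδ.2 hg₁ hk_small))

theorem tendsto_integral_mul_of_approxIdentity {ι : Type*} {l : Filter ι} {K : ι → ℝ → ℝ}
    {g : ℝ → ℝ} {a L M : ℝ} (ha : 0 < a) (hg : IntervalIntegrable g volume 0 a)
    (hgL : Tendsto g (𝓝[>] 0) (𝓝 L))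
    (hK : ∀ᶠ i in l, ContinuousOn (K i) (Icc 0 a))
    (hK_nonneg : ∀ᶠ i in l, ∀ u ∈ Icc 0 a, 0 ≤ K i u)
    (hmass : ∀ δ ∈ Ioo 0 a, Tendsto (fun i => ∫ u in 0..δ, K i u) l (𝓝 M))
    (htail : ∀ δ ∈ Ioo 0 a, TendstoUniformlyOn K 0 l (Ioc δ a)) :
    Tendsto (fun i => ∫ u in 0..a, g u * K i u) l (𝓝 (L * M)) := by
  refine Metric.tendsto_nhds.2 fun ε hε => ?_
  set η := ε / (3 * (|M| + 1)) with hη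
  obtain ⟨δ₀, hδ₀, hgδ₀⟩ := Metric.tendsto_nhdsWithin_nhds.1 hgL η (by positivity)
  obtain ⟨δ, hδ, hδδ₀⟩ : ∃ δ ∈ Ioo 0 a, δ < δ₀ :=
    ⟨min δ₀ a / 2, ⟨by positivity, by linarith [min_le_right δ₀ a]⟩,
      by linarith [min_le_left δ₀ a]⟩
  have hgδ : ∀ u ∈ Ioc 0 δ, |g u - L| ≤ η := fun u hu => by
    refine (hgδ₀ hu.1 ?_).le
    rw [Real.dist_eq, sub_zero, abs_of_pos hu.1]
    linarith [hu.2]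
  set C := ∫ u in δ..a, |g u|
  have hC : 0 ≤ C := intervalIntegral.integral_nonneg hδ.2.le fun u _ => abs_nonneg _
  filter_upwards [hK, hK_nonneg,
    (hmass δ hδ).eventually_lt_const ((le_abs_self M).trans_lt (lt_add_one _)),
    Metric.tendsto_nhds.1 ((hmass δ hδ).const_mul L) (ε / 3) (by positivity),
    Metric.tendstoUniformlyOn_iff.1 (htail δ hδ) (ε / (3 * (C + 1))) (by positivity)]
    with i hKi hKi_nonneg hmass_lt hmass_near htail_small
  have hmass_nonneg : 0 ≤ ∫ u in 0..δ, K i u := intervalIntegral.integral_nonneg hδ.1.le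
    fun u hu => hKi_nonneg u ⟨hu.1, hu.2.trans hδ.2.le⟩
  have hnear : η * ∫ u in 0..δ, K i u ≤ ε / 3 := by
    calc η * ∫ u in 0..δ, K i u ≤ η * (|M| + 1) := by gcongr
      _ = ε / 3 := by rw [hη]; field_simp
  have hfar : ε / (3 * (C + 1)) * C ≤ ε / 3 := by
    rw [div_mul_eq_mul_div, div_le_div_iff₀ (by positivity) (by positivity)]
    nlinarith
  have hest := abs_integral_mul_sub_le (mem_Icc_of_Ioo hδ) hg hKi hKi_nonneg hgδ
    (η' := ε / (3 * (C + 1))) fun u hu => by simpa [dist_comm] using (htail_small u hu).le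
  rw [Real.dist_eq] at hmass_near ⊢
  have htriangle := abs_sub_le (∫ u in 0..a, g u * K i u) (L * ∫ u in 0..δ, K i u) (L * M)
  linarith

noncomputable def circlePoissonKernel (r u : ℝ) : ℝ :=
  (1 - r ^ 2) / (1 - 2 * r * cos u + r ^ 2)

section CirclePoissonKernel

variable {r : ℝ}

theorem circlePoissonKernel_denom_pos (hr : |r| < 1) (u : ℝ) :
    0 < 1 - 2 * r * cos u + r ^ 2 := by
  have h : r * cos u ≤ |r| := by
    calc r * cos u ≤ |r * cos u| := le_abs_self _
      _ ≤ |r| := by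
        rw [abs_mul]; exact mul_le_of_le_one_right (abs_nonneg r) (abs_cos_le_one u)
  nlinarith [sq_abs r, abs_nonneg r]

theorem circlePoissonKernel_pos (hr : |r| < 1) (u : ℝ) : 0 < circlePoissonKernel r u := by
  have : r ^ 2 < 1 := by nlinarith [sq_abs r, abs_nonneg r]
  exact div_pos (by linarith) (circlePoissonKernel_denom_pos hr u)

theorem circlePoissonKernel_neg (r u : ℝ) :
    circlePoissonKernel r (-u) = circlePoissonKernel r u := by
  simp [circlePoissonKernel]

theorem continuous_circlePoissonKernel (hr : |r| < 1) : Continuous (circlePoissonKernel r) :=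
  continuous_const.div (by fun_prop) (fun u => (circlePoissonKernel_denom_pos hr u).ne')

theorem hasDerivAt_circlePoissonKernel_primitive (hr : |r| < 1) {u : ℝ}
    (hu : u ∈ Ioo (-π) π) :
    HasDerivAt (fun x => 2 * arctan ((1 + r) / (1 - r) * tan (x / 2)))
      (circlePoissonKernel r u) u := by
  obtain ⟨hr₁, hr₂⟩ := abs_lt.1 hr
  have hcos : 0 < cos (u / 2) := cos_pos_of_mem_Ioo ⟨by linarith [hu.1], by linarith [hu.2]⟩
  have htan : HasDerivAt (fun x => tan (x / 2)) (1 / cos (u / 2) ^ 2 * (1 / 2)) u :=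
    (hasDerivAt_tan hcos.ne').comp (h₂ := tan) u ((hasDerivAt_id u).div_const 2)
  refine (((hasDerivAt_arctan _).comp u
    (htan.const_mul ((1 + r) / (1 - r)))).const_mul 2).congr_deriv ?_
  have hden := circlePoissonKernel_denom_pos hr u
  have hsec : 1 + ((1 + r) / (1 - r) * tan (u / 2)) ^ 2
      = (1 - 2 * r * cos u + r ^ 2) / ((1 - r) ^ 2 * cos (u / 2) ^ 2) := by
    have hcos_u : cos u = 2 * cos (u / 2) ^ 2 - 1 := by rw [← cos_two_mul]; ring_nf
    rw [tan_eq_sin_div_cos, mul_pow, div_pow, div_pow, sin_sq, hcos_u]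
    field_simp
    ring
  rw [hsec, circlePoissonKernel]
  field_simp
  ring

theorem integral_circlePoissonKernel (hr : |r| < 1) {a : ℝ} (ha : a ∈ Ioo (-π) π) :
    ∫ u in 0..a, circlePoissonKernel r u = 2 * arctan ((1 + r) / (1 - r) * tan (a / 2)) := by
  have h0 : (0 : ℝ) ∈ Ioo (-π) π := ⟨by linarith [pi_pos], pi_pos⟩
  rw [intervalIntegral.integral_eq_sub_of_hasDerivAt
    (fun u hu => hasDerivAt_circlePoissonKernel_primitive hr
      (ordConnected_Ioo.uIcc_subset h0 ha hu))
    ((continuous_circlePoissonKernel hr).intervalIntegrable 0 a)]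
  simp

theorem circlePoissonKernel_le_of_cos_le (hr₀ : 0 ≤ r) (hr₁ : r < 1) {u v : ℝ}
    (h : cos u ≤ cos v) : circlePoissonKernel r u ≤ circlePoissonKernel r v := by
  have hr : |r| < 1 := by rwa [abs_of_nonneg hr₀]
  refine div_le_div_of_nonneg_left (by nlinarith) (circlePoissonKernel_denom_pos hr v) ?_
  nlinarith

theorem tendsto_circlePoissonKernel_one {u : ℝ} (hu : cos u ≠ 1) :
    Tendsto (fun r => circlePoissonKernel r u) (𝓝 1) (𝓝 0) := by
  have hden : 1 - 2 * 1 * cos u + 1 ^ 2 ≠ 0 := fun h => hu (by linarith)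
  have h := ((by fun_prop : Continuous fun r : ℝ => 1 - r ^ 2).tendsto 1).div
    ((by fun_prop : Continuous fun r : ℝ => 1 - 2 * r * cos u + r ^ 2).tendsto 1) hden
  norm_num at h
  exact h

end CirclePoissonKernel

theorem eventually_abs_lt_one_nhdsLT_one : ∀ᶠ r in 𝓝[<] (1 : ℝ), |r| < 1 := by
  filter_upwards [Ioo_mem_nhdsLT (show (-1 : ℝ) < 1 by norm_num)] with r hr using abs_lt.2 hr

theorem tendsto_integral_circlePoissonKernel {δ : ℝ} (hδ : δ ∈ Ioo 0 π) :
    Tendsto (fun r => ∫ u in 0..δ, circlePoissonKernel r u) (𝓝[<] 1) (𝓝 π) := by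
  have htan : 0 < tan (δ / 2) :=
    tan_pos_of_pos_of_lt_pi_div_two (by linarith [hδ.1]) (by linarith [hδ.2])
  have hgap : Tendsto (fun r : ℝ => 1 - r) (𝓝[<] 1) (𝓝[>] 0) := by
    refine tendsto_nhdsWithin_iff.2 ⟨?_, ?_⟩
    · simpa using ((tendsto_const_nhds (x := (1 : ℝ))).sub tendsto_id).mono_left
        (nhdsWithin_le_nhds (a := (1 : ℝ)) (s := Iio 1))
    · filter_upwards [self_mem_nhdsWithin] with r (hr : r < 1)
      exact sub_pos.2 hr
  have hratio : Tendsto (fun r : ℝ => (1 + r) / (1 - r) * tan (δ / 2)) (𝓝[<] 1) atTop := by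
    have h := (tendsto_inv_nhdsGT_zero.comp hgap).const_mul_atTop (show (0 : ℝ) < 2 by norm_num)
    refine (tendsto_atTop_add_const_right _ (-1) h).atTop_mul_const htan |>.congr' ?_
    filter_upwards [self_mem_nhdsWithin] with r (hr : r < 1)
    have : 1 - r ≠ 0 := sub_ne_zero.2 hr.ne'
    simp only [Function.comp_apply]
    field_simp
    ring
  have hlim := ((tendsto_arctan_atTop.mono_right nhdsWithin_le_nhds).comp hratio).const_mul 2
  rw [mul_div_cancel₀ _ two_ne_zero] at hlim
  refine hlim.congr' ?_
  filter_upwards [eventually_abs_lt_one_nhdsLT_one] with r hr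
  exact (integral_circlePoissonKernel hr ⟨by linarith [hδ.1, pi_pos], hδ.2⟩).symm

theorem tendstoUniformlyOn_circlePoissonKernel {δ : ℝ} (hδ : δ ∈ Ioc 0 π) :
    TendstoUniformlyOn circlePoissonKernel 0 (𝓝[<] 1) (Icc δ π) := by
  have hcos : cos δ ≠ 1 := (cos_zero ▸ cos_lt_cos_of_nonneg_of_le_pi le_rfl hδ.2 hδ.1).ne
  refine Metric.tendstoUniformlyOn_iff.2 fun ε hε => ?_
  filter_upwards [Ioo_mem_nhdsLT one_pos, eventually_abs_lt_one_nhdsLT_one,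
    (Metric.tendsto_nhds.1 (tendsto_circlePoissonKernel_one hcos) ε hε).filter_mono
      nhdsWithin_le_nhds]
    with r hr hr' hrδ u hu
  rw [Real.dist_eq, sub_zero] at hrδ
  rw [Pi.zero_apply, dist_zero_left, Real.norm_eq_abs, abs_of_pos (circlePoissonKernel_pos hr' u)]
  exact (circlePoissonKernel_le_of_cos_le hr.1.le hr.2
    (cos_le_cos_of_nonneg_of_le_pi hδ.1.le hu.2 hu.1)).trans_lt ((le_abs_self _).trans_lt hrδ)

theorem tendsto_integral_mul_circlePoissonKernel {g : ℝ → ℝ} {L : ℝ}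
    (hg : IntervalIntegrable g volume 0 π) (hgL : Tendsto g (𝓝[>] 0) (𝓝 L)) :
    Tendsto (fun r => ∫ u in 0..π, g u * circlePoissonKernel r u) (𝓝[<] 1) (𝓝 (L * π)) :=
  tendsto_integral_mul_of_approxIdentity pi_pos hg hgL
    (eventually_abs_lt_one_nhdsLT_one.mono fun _ hr =>
      (continuous_circlePoissonKernel hr).continuousOn)
    (eventually_abs_lt_one_nhdsLT_one.mono fun _ hr u _ => (circlePoissonKernel_pos hr u).le)
    (fun _ hδ => tendsto_integral_circlePoissonKernel hδ)
    (fun _ hδ =>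
      (tendstoUniformlyOn_circlePoissonKernel ⟨hδ.1, hδ.2.le⟩).mono Ioc_subset_Icc_self)

theorem integral_mul_of_even {h w : ℝ → ℝ} {a : ℝ} (hw : ∀ u, w (-u) = w u)
    (hint : IntervalIntegrable (fun u => h u * w u) volume (-a) a) :
    ∫ u in -a..a, h u * w u = (∫ u in 0..a, h (-u) * w u) + ∫ u in 0..a, h u * w u := by
  have h0 : (0 : ℝ) ∈ uIcc (-a) a := by rcases le_total 0 a with ha | ha <;> simp [ha]
  rw [← intervalIntegral.integral_add_adjacent_intervals
    (hint.mono_set (uIcc_subset_uIcc_left h0)) (hint.mono_set (uIcc_subset_uIcc_right h0))]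
  congr 1
  simpa [hw] using
    (intervalIntegral.integral_comp_neg (a := 0) (b := a) (fun u => h u * w u)).symm

theorem tendsto_integral_mul_circlePoissonKernel_of_jump {g : ℝ → ℝ} {Lm Lp : ℝ}
    (hg : IntervalIntegrable g volume (-π) π) (hleft : Tendsto g (𝓝[<] 0) (𝓝 Lm))
    (hright : Tendsto g (𝓝[>] 0) (𝓝 Lp)) :
    Tendsto (fun r => ∫ u in -π..π, g u * circlePoissonKernel r u) (𝓝[<] 1)
      (𝓝 ((Lm + Lp) * π)) := by
  have h0 : (0 : ℝ) ∈ uIcc (-π) π := by simp [pi_pos.le]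
  have hneg : Tendsto (fun u => g (-u)) (𝓝[>] 0) (𝓝 Lm) :=
    hleft.comp (show map (fun u => -u) (𝓝[>] (0 : ℝ)) ≤ 𝓝[<] 0 by simp)
  have hneg_int : IntervalIntegrable (fun u => g (-u)) volume 0 π := by
    simpa using ((IntervalIntegrable.iff_comp_neg (f := g) (a := -π) (b := 0)).1
      (hg.mono_set (uIcc_subset_uIcc_left h0))).symm
  have hpos_int : IntervalIntegrable g volume 0 π := hg.mono_set (uIcc_subset_uIcc_right h0)
  rw [add_mul]
  refine ((tendsto_integral_mul_circlePoissonKernel hneg_int hneg).add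
    (tendsto_integral_mul_circlePoissonKernel hpos_int hright)).congr' ?_
  filter_upwards [eventually_abs_lt_one_nhdsLT_one] with r hr
  exact (integral_mul_of_even (circlePoissonKernel_neg r)
    (hg.mul_continuousOn (continuous_circlePoissonKernel hr).continuousOn)).symm

theorem poisson_integral_tendsto_at_jump
    (f : ℝ → ℝ) (hper : Function.Periodic f (2 * π))
    (hint : IntervalIntegrable f volume (-π) π)
    (t Lm Lp : ℝ)
    (hleft : Filter.Tendsto f (nhdsWithin t (Set.Iio t)) (nhds Lm))
    (hright : Filter.Tendsto f (nhdsWithin t (Set.Ioi t)) (nhds Lp)) :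
    Filter.Tendsto
      (fun r : ℝ => (1 / (2 * π)) *
        ∫ u in (-π)..π, f (u + t) * ((1 - r ^ 2) / (1 - 2 * r * Real.cos u + r ^ 2)))
      (nhdsWithin 1 (Set.Iio 1)) (nhds ((Lm + Lp) / 2)) := by
  have hf : IntervalIntegrable f volume (-π + t) (π + t) :=
    hper.intervalIntegrable two_pi_pos.ne' (by rwa [show -π + 2 * π = π by ring]) _ _
  have hleft' : Tendsto (fun u => f (u + t)) (𝓝[<] 0) (𝓝 Lm) :=
    hleft.comp (by rw [Tendsto, map_add_right_nhdsLT, zero_add])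
  have hright' : Tendsto (fun u => f (u + t)) (𝓝[>] 0) (𝓝 Lp) :=
    hright.comp (by rw [Tendsto, map_add_right_nhdsGT, zero_add])
  have h := (tendsto_integral_mul_circlePoissonKernel_of_jump
    (by simpa using hf.comp_add_right t) hleft' hright').const_mul (1 / (2 * π))
  rwa [show 1 / (2 * π) * ((Lm + Lp) * π) = (Lm + Lp) / 2 by field_simp] at h
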